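/- arXiv:1407.7776 — 2 statements merged into one kernel-verified Lean document; each statement's English description precedes it below -/
import Mathlib

section
/- Let Z = {z_n} be a sequence in the unit disc that is sampling for U, i.e., there is C ∈ (0,1) with sup_{n≠m} β(f(z_n), f(z_m))/β(z_n, z_m) ≥ C·N(f) for all analytic self-maps f of D, where N(f) = sup_z |f^h(z)|. Then Z is R-dense for some R > 0: every hyperbolic disc of radius greater than R meets Z. -/
open Complex Set ComplexConjugate

noncomputable section

/-- The open unit disc in ℂ. -/
def unitDisc : Set ℂ := {z : ℂ | ‖z‖ < 1}

/-- Pseudohyperbolic distance ρ(a,b) = |(a-b)/(1 - conj b · a)|. -/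
def pd (a b : ℂ) : ℝ := ‖(a - b) / (1 - conj b * a)‖

/-- Hyperbolic distance β = log((1+ρ)/(1-ρ)). -/
def hd (a b : ℂ) : ℝ := Real.log ((1 + pd a b) / (1 - pd a b))

/-- The complex pseudohyperbolic "bracket" [a,b] = (b-a)/(1 - conj b · a). -/
def hbr (a b : ℂ) : ℂ := (b - a) / (1 - conj b * a)

/-- f is an analytic self-map of the unit disc. -/
def IsSelfMap (f : ℂ → ℂ) : Prop :=
  DifferentiableOn ℂ f unitDisc ∧ Set.MapsTo f unitDisc unitDisc

/-- Hyperbolic derivative f^h(z) = (1-|z|²) f'(z) / (1-|f z|²). -/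
def hypDeriv (f : ℂ → ℂ) (z : ℂ) : ℂ :=
  (1 - (‖z‖ : ℂ) ^ 2) * deriv f z / (1 - (‖f z‖ : ℂ) ^ 2)

/-- N(f) = sup over the disc of the modulus of the hyperbolic derivative. -/
def Nf (f : ℂ → ℂ) : ℝ := ⨆ z ∈ unitDisc, ‖hypDeriv f z‖

/-- sup_{n ≠ m} β(f(z_n), f(z_m))/β(z_n, z_m). -/
def sampSup (Z : ℕ → ℂ) (f : ℂ → ℂ) : ℝ :=
  sSup {t : ℝ | ∃ n m : ℕ, n ≠ m ∧ t = hd (f (Z n)) (f (Z m)) / hd (Z n) (Z m)}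

/-- Z is a sampling sequence for 𝒰 with constant C. -/
def IsSamplingSeq (Z : ℕ → ℂ) (C : ℝ) : Prop :=
  ∀ f : ℂ → ℂ, IsSelfMap f → C * Nf f ≤ sampSup Z f

/-! If the hyperbolic disc of radius `R = 24 / C + log (64 / C)` about `w` misses `Z`, test the
sampling inequality on `f = φ_w / 4`, where `φ_w z = hbr z w = (w - z) / (1 - w̄ z)` is the disc
automorphism exchanging `w` and `0`. Then `N(f) ≥ |f^h(w)| = 1/4`, so `C N(f) ≥ C / 4`.

On the other hand every quotient `β(f z_n, f z_m) / β(z_n, z_m)` is at most `C / 8`. If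
`β(z_n, z_m) ≥ T = 24 / C` this holds because `f` maps into the disc of radius `1/4`, on which
`β ≤ 3`. Otherwise `u = φ_w z_n` and `v = φ_w z_m` lie near the boundary with `ρ(u, v) = ρ(z_n, z_m)`
bounded away from `1`, which forces `|1 - v̄ u| ≲ e^{T - R}`; since `ρ(u/4, v/4) ≲ |u - v|
= ρ(u, v) |1 - v̄ u|`, the map `f` contracts the pair by a factor `(16/3) e^{T - R} = C / 12`. -/

lemma normSq_one_sub_conj_mul_sub_normSq_sub (a b : ℂ) :
    normSq (1 - conj b * a) - normSq (a - b) = (1 - normSq a) * (1 - normSq b) := by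
  simp only [normSq_apply, mul_re, mul_im, sub_re, sub_im, conj_re, conj_im, one_re, one_im]
  ring

lemma one_sub_conj_mul_ne_zero {a b : ℂ} (ha : ‖a‖ < 1) (hb : ‖b‖ < 1) :
    1 - conj b * a ≠ 0 := by
  have : ‖conj b * a‖ < 1 := by
    rw [norm_mul, norm_conj]
    nlinarith [norm_nonneg a, norm_nonneg b]
  intro h
  rw [← sub_eq_zero.mp h, norm_one] at this
  exact this.false

lemma norm_one_sub_ofReal_norm_sq {z : ℂ} (hz : ‖z‖ ≤ 1) :
    ‖1 - (‖z‖ : ℂ) ^ 2‖ = 1 - ‖z‖ ^ 2 := by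
  rw [← ofReal_pow, ← ofReal_one, ← ofReal_sub, norm_real, Real.norm_eq_abs,
    abs_of_nonneg (by nlinarith [norm_nonneg z])]

lemma pd_nonneg (a b : ℂ) : 0 ≤ pd a b := norm_nonneg _

lemma pd_lt_one {a b : ℂ} (ha : ‖a‖ < 1) (hb : ‖b‖ < 1) : pd a b < 1 := by
  have hnormSq : normSq (a - b) < normSq (1 - conj b * a) := by
    have := normSq_one_sub_conj_mul_sub_normSq_sub a b
    simp only [← Complex.sq_norm] at this ⊢
    have ha' : 0 < 1 - ‖a‖ ^ 2 := by nlinarith [norm_nonneg a]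
    have hb' : 0 < 1 - ‖b‖ ^ 2 := by nlinarith [norm_nonneg b]
    nlinarith [mul_pos ha' hb']
  rw [pd, norm_div, div_lt_one (norm_pos_iff.mpr (one_sub_conj_mul_ne_zero ha hb)),
    norm_def, norm_def]
  exact Real.sqrt_lt_sqrt (normSq_nonneg _) hnormSq

lemma pd_comm (a b : ℂ) : pd a b = pd b a := by
  rw [pd, pd, norm_div, norm_div, norm_sub_rev, ← norm_conj (1 - conj a * b)]
  simp only [map_sub, map_one, map_mul, conj_conj, mul_comm]

lemma norm_sub_eq_pd_mul {u v : ℂ} (hu : ‖u‖ < 1) (hv : ‖v‖ < 1) :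
    ‖u - v‖ = pd u v * ‖1 - conj v * u‖ := by
  rw [pd, norm_div, div_mul_cancel₀ _ (norm_ne_zero_iff.mpr (one_sub_conj_mul_ne_zero hu hv))]

lemma one_sub_pd_mul_norm_le {u v : ℂ} (hu : ‖u‖ < 1) (hv : ‖v‖ < 1) :
    (1 - pd u v) * ‖1 - conj v * u‖ ≤ 1 - ‖u‖ ^ 2 := by
  have htri : ‖1 - conj v * u‖ ≤ (1 - ‖u‖ ^ 2) + ‖u - v‖ := by
    have hsplit : 1 - conj v * u = (1 - (‖u‖ : ℂ) ^ 2) + conj (u - v) * u := by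
      rw [← ofReal_pow, Complex.sq_norm, normSq_eq_conj_mul_self, map_sub]
      ring
    rw [hsplit, ← norm_one_sub_ofReal_norm_sq hu.le]
    refine (norm_add_le _ _).trans (add_le_add le_rfl ?_)
    rw [norm_mul, norm_conj]
    exact mul_le_of_le_one_right (norm_nonneg _) hu.le
  rw [norm_sub_eq_pd_mul hu hv] at htri
  linarith

lemma pd_le_of_norm_le_quarter {x y : ℂ} (hx : ‖x‖ ≤ 1 / 4) (hy : ‖y‖ ≤ 1 / 4) :
    pd x y ≤ 16 / 15 * ‖x - y‖ := by
  have hden : (15 / 16 : ℝ) ≤ ‖1 - conj y * x‖ := by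
    have := norm_sub_norm_le (1 : ℂ) (conj y * x)
    rw [norm_one, norm_mul, norm_conj] at this
    nlinarith [norm_nonneg x, norm_nonneg y]
  rw [pd, norm_div, div_le_iff₀ (by linarith)]
  nlinarith [norm_nonneg (x - y)]

lemma hd_nonneg {a b : ℂ} (h : pd a b < 1) : 0 ≤ hd a b :=
  Real.log_nonneg <| (one_le_div (by linarith)).mpr (by linarith [pd_nonneg a b])

lemma pd_le_hd {a b : ℂ} (h : pd a b < 1) : pd a b ≤ hd a b := by
  have hρ := pd_nonneg a b
  rw [hd, Real.log_div (by linarith) (by linarith)]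
  have := Real.log_le_sub_one_of_pos (by linarith : 0 < 1 - pd a b)
  have := Real.log_nonneg (by linarith : 1 ≤ 1 + pd a b)
  linarith

lemma hd_le_five_mul_pd {a b : ℂ} (h : pd a b ≤ 8 / 15) : hd a b ≤ 5 * pd a b := by
  have hρ := pd_nonneg a b
  have hpos : 0 < 1 - pd a b := by linarith
  refine (Real.log_le_sub_one_of_pos (by positivity)).trans ?_
  rw [div_sub_one hpos.ne', div_le_iff₀ hpos]
  nlinarith

lemma exp_neg_le_one_sub_pd {a b : ℂ} (h : pd a b < 1) {T : ℝ} (hT : hd a b < T) :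
    Real.exp (-T) ≤ 1 - pd a b := by
  have hpos : 0 < 1 - pd a b := by linarith
  rw [hd, Real.log_lt_iff_lt_exp (div_pos (by linarith [pd_nonneg a b]) hpos),
    div_lt_iff₀ hpos] at hT
  rw [Real.exp_neg, inv_le_iff_one_le_mul₀ (Real.exp_pos T)]
  nlinarith [pd_nonneg a b]

lemma one_sub_pd_sq_le {a b : ℂ} (h : pd a b < 1) {R : ℝ} (hR : R ≤ hd a b) :
    1 - pd a b ^ 2 ≤ 4 * Real.exp (-R) := by
  have hρ := pd_nonneg a b
  have hpos : 0 < 1 - pd a b := by linarith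
  rw [hd, Real.le_log_iff_exp_le (by positivity), le_div_iff₀ hpos] at hR
  have : 1 - pd a b ≤ 2 * Real.exp (-R) := by
    rw [Real.exp_neg, le_mul_inv_iff₀ (Real.exp_pos R)]
    linarith
  nlinarith

lemma hd_le_of_norm_le_quarter {x y : ℂ} (hx : ‖x‖ ≤ 1 / 4) (hy : ‖y‖ ≤ 1 / 4) :
    hd x y ≤ 16 / 3 * ‖x - y‖ := by
  have hpd := pd_le_of_norm_le_quarter hx hy
  have hsub : ‖x - y‖ ≤ 1 / 2 := (norm_sub_le x y).trans (by linarith)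
  linarith [hd_le_five_mul_pd (by linarith : pd x y ≤ 8 / 15)]

lemma norm_hbr (z w : ℂ) : ‖hbr z w‖ = pd z w := by
  rw [hbr, pd, ← neg_sub, neg_div, norm_neg]

lemma pd_hbr {w a b : ℂ} (hw : ‖w‖ < 1) (ha : ‖a‖ < 1) (hb : ‖b‖ < 1) :
    pd (hbr a w) (hbr b w) = pd a b := by
  have hwa := one_sub_conj_mul_ne_zero ha hw
  have hwb := one_sub_conj_mul_ne_zero hb hw
  have hwb' : 1 - w * conj b ≠ 0 := by
    simpa [mul_comm] using (map_ne_zero (starRingEnd ℂ)).mpr hwb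
  have hdiff : hbr a w - hbr b w
      = (b - a) * (1 - conj w * w) / ((1 - conj w * a) * (1 - conj w * b)) := by
    rw [hbr, hbr, div_sub_div _ _ hwa hwb]
    ring
  have hden : 1 - conj (hbr b w) * hbr a w
      = (1 - conj b * a) * (1 - conj w * w) / ((1 - w * conj b) * (1 - conj w * a)) := by
    simp only [hbr, map_div₀, map_sub, map_mul, map_one, conj_conj]
    rw [div_mul_div_comm, one_sub_div (mul_ne_zero hwb' hwa)]
    ring
  have hratio : (hbr a w - hbr b w) / (1 - conj (hbr b w) * hbr a w)
      = (b - a) / (1 - conj b * a) * ((1 - w * conj b) / (1 - conj w * b)) := by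
    have hW := one_sub_conj_mul_ne_zero hw hw
    have hD := one_sub_conj_mul_ne_zero ha hb
    rw [hdiff, hden, div_div_div_eq, div_mul_div_comm,
      div_eq_div_iff (by simp [*]) (by simp [*])]
    ring
  have hunimodular : ‖(1 - w * conj b) / (1 - conj w * b)‖ = 1 := by
    rw [norm_div, div_eq_one_iff_eq (norm_ne_zero_iff.mpr hwb), ← norm_conj (1 - conj w * b)]
    simp only [map_sub, map_one, map_mul, conj_conj]
  rw [pd, hratio, norm_mul, hunimodular, mul_one, pd, norm_div, norm_div, norm_sub_rev]

lemma hasDerivAt_hbr {w z : ℂ} (hz : 1 - conj w * z ≠ 0) :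
    HasDerivAt (fun z ↦ hbr z w) ((conj w * w - 1) / (1 - conj w * z) ^ 2) z := by
  refine (((hasDerivAt_id' z).const_sub w).div
    (((hasDerivAt_id' z).const_mul (conj w)).const_sub 1) hz).congr_deriv ?_
  ring

def quarterMoebius (w z : ℂ) : ℂ := hbr z w / 4

lemma norm_quarterMoebius_le {w z : ℂ} (hw : ‖w‖ < 1) (hz : ‖z‖ < 1) :
    ‖quarterMoebius w z‖ ≤ 1 / 4 := by
  rw [quarterMoebius, norm_div, norm_hbr, RCLike.norm_ofNat]
  linarith [pd_lt_one hz hw]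

lemma hasDerivAt_quarterMoebius {w z : ℂ} (hz : 1 - conj w * z ≠ 0) :
    HasDerivAt (quarterMoebius w) ((conj w * w - 1) / (1 - conj w * z) ^ 2 / 4) z :=
  (hasDerivAt_hbr hz).div_const 4

lemma quarterMoebius_isSelfMap {w : ℂ} (hw : ‖w‖ < 1) : IsSelfMap (quarterMoebius w) :=
  ⟨fun z hz ↦ (hasDerivAt_quarterMoebius (one_sub_conj_mul_ne_zero hz hw)).differentiableAt
      |>.differentiableWithinAt,
    fun z hz ↦ show ‖_‖ < 1 by linarith [norm_quarterMoebius_le hw hz]⟩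

lemma hypDeriv_quarterMoebius_self {w : ℂ} (hw : ‖w‖ < 1) :
    hypDeriv (quarterMoebius w) w = -1 / 4 := by
  have hww := one_sub_conj_mul_ne_zero hw hw
  have hzero : quarterMoebius w w = 0 := by simp [quarterMoebius, hbr]
  rw [hypDeriv, (hasDerivAt_quarterMoebius hww).deriv, hzero, norm_zero, ofReal_zero,
    ← conj_mul']
  field_simp
  ring

lemma norm_hypDeriv_quarterMoebius_le {w z : ℂ} (hw : ‖w‖ < 1) (hz : ‖z‖ < 1) :
    ‖hypDeriv (quarterMoebius w) z‖ ≤ 1 / (1 - ‖w‖) ^ 2 := by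
  have hwz := one_sub_conj_mul_ne_zero hz hw
  have hf := norm_quarterMoebius_le hw hz
  have hw' : 0 < 1 - ‖w‖ := by linarith
  have hgap : 1 - ‖w‖ ≤ ‖1 - conj w * z‖ := by
    have := norm_sub_norm_le (1 : ℂ) (conj w * z)
    rw [norm_one, norm_mul, norm_conj] at this
    nlinarith [norm_nonneg w, norm_nonneg z]
  have hderiv : ‖deriv (quarterMoebius w) z‖ ≤ 1 / 4 / (1 - ‖w‖) ^ 2 := by
    rw [(hasDerivAt_quarterMoebius hwz).deriv, norm_div, norm_div, norm_pow,
      RCLike.norm_ofNat, ← norm_neg, neg_sub, conj_mul', norm_one_sub_ofReal_norm_sq hw.le]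
    rw [div_div, div_le_div_iff₀ (by positivity) (by positivity)]
    have := pow_le_pow_left₀ hw'.le hgap 2
    nlinarith [norm_nonneg w]
  have hnum : ‖1 - (‖z‖ : ℂ) ^ 2‖ ≤ 1 := by
    rw [norm_one_sub_ofReal_norm_sq hz.le]
    nlinarith [norm_nonneg z]
  have hden : 15 / 16 ≤ ‖1 - (‖quarterMoebius w z‖ : ℂ) ^ 2‖ := by
    rw [norm_one_sub_ofReal_norm_sq (by linarith)]
    nlinarith [norm_nonneg (quarterMoebius w z)]
  rw [hypDeriv, norm_div, norm_mul, div_le_iff₀ (by linarith)]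
  calc ‖1 - (‖z‖ : ℂ) ^ 2‖ * ‖deriv (quarterMoebius w) z‖ ≤ 1 * (1 / 4 / (1 - ‖w‖) ^ 2) :=
        mul_le_mul hnum hderiv (norm_nonneg _) zero_le_one
    _ ≤ 1 / (1 - ‖w‖) ^ 2 * (15 / 16) := by
        rw [div_div, one_mul, div_mul_eq_mul_div, one_mul,
          div_le_div_iff₀ (by positivity) (by positivity)]
        nlinarith [sq_nonneg (1 - ‖w‖)]
    _ ≤ 1 / (1 - ‖w‖) ^ 2 * ‖1 - (‖quarterMoebius w z‖ : ℂ) ^ 2‖ := by gcongr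

lemma norm_hypDeriv_le_Nf {f : ℂ → ℂ} {M : ℝ} (hM : ∀ z ∈ unitDisc, ‖hypDeriv f z‖ ≤ M)
    {z : ℂ} (hz : z ∈ unitDisc) : ‖hypDeriv f z‖ ≤ Nf f := by
  have hbdd : BddAbove (range fun z ↦ ⨆ _ : z ∈ unitDisc, ‖hypDeriv f z‖) :=
    ⟨max M 0, forall_mem_range.mpr fun z ↦
      Real.iSup_le (fun hz ↦ le_max_of_le_left (hM z hz)) (le_max_right M 0)⟩
  calc ‖hypDeriv f z‖ = ⨆ _ : z ∈ unitDisc, ‖hypDeriv f z‖ := (ciSup_pos (f := fun _ ↦ ‖hypDeriv f z‖) hz).symm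
    _ ≤ Nf f := le_ciSup hbdd z

lemma quarter_le_Nf_quarterMoebius {w : ℂ} (hw : ‖w‖ < 1) : 1 / 4 ≤ Nf (quarterMoebius w) := by
  have hnorm : ‖hypDeriv (quarterMoebius w) w‖ = 1 / 4 := by
    rw [hypDeriv_quarterMoebius_self hw, norm_div, norm_neg, norm_one, RCLike.norm_ofNat]
  exact hnorm ▸ norm_hypDeriv_le_Nf (fun z hz ↦ norm_hypDeriv_quarterMoebius_le hw hz) hw

lemma sampSup_le {Z : ℕ → ℂ} {f : ℂ → ℂ} {B : ℝ} (hB : 0 ≤ B)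
    (h : ∀ n m, n ≠ m → hd (f (Z n)) (f (Z m)) / hd (Z n) (Z m) ≤ B) : sampSup Z f ≤ B :=
  Real.sSup_le (by rintro _ ⟨n, m, hnm, rfl⟩; exact h n m hnm) hB

lemma hd_quarterMoebius_le_of_hd_lt {w a b : ℂ} {T R : ℝ} (hw : ‖w‖ < 1) (ha : ‖a‖ < 1)
    (hb : ‖b‖ < 1) (hR : R ≤ hd w a) (hT : hd a b < T) :
    hd (quarterMoebius w a) (quarterMoebius w b) ≤ 16 / 3 * Real.exp (T - R) * hd a b := by
  set u := hbr a w
  set v := hbr b w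
  have hu : ‖u‖ < 1 := by rw [norm_hbr]; exact pd_lt_one ha hw
  have hv : ‖v‖ < 1 := by rw [norm_hbr]; exact pd_lt_one hb hw
  have hρ := pd_lt_one ha hb
  have hpd : pd u v = pd a b := pd_hbr hw ha hb
  have hboundary : 1 - ‖u‖ ^ 2 ≤ 4 * Real.exp (-R) := by
    rw [norm_hbr, pd_comm]
    exact one_sub_pd_sq_le (pd_lt_one hw ha) hR
  have hden : ‖1 - conj v * u‖ ≤ 4 * Real.exp (T - R) := by
    have := (mul_le_mul_of_nonneg_right (exp_neg_le_one_sub_pd hρ hT) (norm_nonneg _)).trans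
      ((hpd ▸ one_sub_pd_mul_norm_le hu hv).trans hboundary)
    rw [Real.exp_neg, Real.exp_neg, inv_mul_le_iff₀ (Real.exp_pos T)] at this
    exact this.trans_eq (by rw [Real.exp_sub]; ring)
  have hsub : ‖quarterMoebius w a - quarterMoebius w b‖ = ‖u - v‖ / 4 := by
    rw [quarterMoebius, quarterMoebius, ← sub_div, norm_div, RCLike.norm_ofNat]
  have hρ0 := pd_nonneg a b
  calc hd (quarterMoebius w a) (quarterMoebius w b) ≤ 16 / 3 * (‖u - v‖ / 4) :=
        hsub ▸ hd_le_of_norm_le_quarter (norm_quarterMoebius_le hw ha)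
          (norm_quarterMoebius_le hw hb)
    _ = 4 / 3 * pd a b * ‖1 - conj v * u‖ := by rw [norm_sub_eq_pd_mul hu hv, hpd]; ring
    _ ≤ 4 / 3 * pd a b * (4 * Real.exp (T - R)) := by gcongr
    _ ≤ 16 / 3 * Real.exp (T - R) * hd a b := by
        nlinarith [pd_le_hd hρ, Real.exp_pos (T - R)]

lemma hd_quarterMoebius_le {w a b : ℂ} {T R : ℝ} (hw : ‖w‖ < 1) (ha : ‖a‖ < 1) (hb : ‖b‖ < 1)
    (hT : 0 < T) (hR : R ≤ hd w a) :
    hd (quarterMoebius w a) (quarterMoebius w b)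
      ≤ max (3 / T) (16 / 3 * Real.exp (T - R)) * hd a b := by
  rcases le_or_gt T (hd a b) with hfar | hclose
  · have hfa := norm_quarterMoebius_le hw ha
    have hfb := norm_quarterMoebius_le hw hb
    have hsub : ‖quarterMoebius w a - quarterMoebius w b‖ ≤ 1 / 2 :=
      (norm_sub_le _ _).trans (by linarith)
    calc hd (quarterMoebius w a) (quarterMoebius w b) ≤ 3 / T * T := by
          rw [div_mul_cancel₀ _ hT.ne']
          linarith [hd_le_of_norm_le_quarter hfa hfb]
      _ ≤ max (3 / T) (16 / 3 * Real.exp (T - R)) * hd a b := by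
          gcongr
          exact le_max_left _ _
  · exact (hd_quarterMoebius_le_of_hd_lt hw ha hb hR hclose).trans
      (mul_le_mul_of_nonneg_right (le_max_right _ _) (hd_nonneg (pd_lt_one ha hb)))

theorem sampling_implies_Rdense
    (Z : ℕ → ℂ) (hZ : ∀ n, Z n ∈ unitDisc)
    (C : ℝ) (hC0 : 0 < C) (hC1 : C < 1) (hsamp : IsSamplingSeq Z C) :
    ∃ R > 0, ∀ z₀ ∈ unitDisc, ∀ r, R < r → ∃ n, hd z₀ (Z n) < r := by
  by_contra! hsparse
  set T := 24 / C
  set R := T + Real.log (64 / C)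
  have hT : 0 < T := by positivity
  have hlog : 0 < Real.log (64 / C) := Real.log_pos (by rw [lt_div_iff₀ hC0]; linarith)
  obtain ⟨w, hw, r, hRr, hfar⟩ := hsparse R (by positivity)
  have hcontraction : max (3 / T) (16 / 3 * Real.exp (T - R)) = C / 8 := by
    rw [show T - R = -Real.log (64 / C) by ring, Real.exp_neg, Real.exp_log (by positivity),
      inv_div, show 3 / T = C / 8 by rw [div_div_eq_mul_div]; ring]
    exact max_eq_left (by linarith)
  have hsup : sampSup Z (quarterMoebius w) ≤ C / 8 :=
    sampSup_le (by positivity) fun n m _ ↦ div_le_of_le_mul₀ (hd_nonneg (pd_lt_one (hZ n) (hZ m)))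
      (by positivity) (hcontraction ▸ hd_quarterMoebius_le hw (hZ n) (hZ m) hT
        (hRr.le.trans (hfar n)))
  have hN := quarter_le_Nf_quarterMoebius hw
  have := hsamp _ (quarterMoebius_isSelfMap hw)
  nlinarith
end
end

section
/- Let f ∈ U, let φ and ψ be automorphisms of the unit disc, and take pairwise distinct points z₁, …, z_n in D. Then, for j = 1, there exists θ ∈ [0, 2π) such that Δ^j(ψ∘f∘φ)(z; z₁, …, z_j) = e^{iθ}·Δ^j f(φ(z); φ(z₁), …, φ(z_j)) for all z ∈ D. -/
open Complex Set ComplexConjugate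

noncomputable section

/-- Automorphisms of the unit disc: z ↦ e^{iθ}(a - z)/(1 - conj(a) z). -/
def IsDiscAutomorphism (τ : ℂ → ℂ) : Prop :=
  ∃ (θ : ℝ) (a : ℂ), a ∈ unitDisc ∧
    ∀ z ∈ unitDisc, τ z = Complex.exp (θ * Complex.I) * ((a - z) / (1 - conj a * z))

/-- The hyperbolic difference quotient Δ¹f(z; z₁), with the hyperbolic
derivative at z = z₁. -/
def hdq1 (f : ℂ → ℂ) (z₁ z : ℂ) : ℂ :=
  if z = z₁ then hypDeriv f z₁ else hbr (f z) (f z₁) / hbr z z₁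

/-! ### Auxiliary lemmas -/

lemma absq (x : ℂ) : ((‖x‖ : ℂ))^2 = x * conj x := by
  rw [Complex.mul_conj]
  norm_cast
  exact Complex.sq_norm x

lemma one_sub_ne {x y : ℂ} (hx : ‖x‖ < 1) (hy : ‖y‖ < 1) :
    (1 : ℂ) - conj x * y ≠ 0 := by
  intro h
  have h1 : conj x * y = 1 := by linear_combination -h
  have h2 : ‖conj x * y‖ = 1 := by rw [h1]; simp
  rw [norm_mul, Complex.norm_conj] at h2
  nlinarith [norm_nonneg x, norm_nonneg y]

lemma one_sub_ne' {x y : ℂ} (hx : ‖x‖ < 1) (hy : ‖y‖ < 1) :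
    (1 : ℂ) - x * conj y ≠ 0 := by
  intro h
  exact one_sub_ne hx hy (by simpa using congrArg (starRingEnd ℂ) h)

lemma one_sub_self_conj_ne {x : ℂ} (hx : ‖x‖ < 1) :
    (1 : ℂ) - x * conj x ≠ 0 := one_sub_ne' hx hx

lemma conj_ne_zero_of_ne {x : ℂ} (hx : x ≠ 0) : conj x ≠ 0 := by
  intro h
  exact hx (by simpa using congrArg (starRingEnd ℂ) h)

lemma frac_mem {a z : ℂ} (ha : ‖a‖ < 1) (hz : ‖z‖ < 1) :
    ‖(a - z)/(1 - conj a * z)‖ < 1 := by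
  rw [norm_div, div_lt_one (norm_pos_iff.mpr (one_sub_ne ha hz))]
  have key : Complex.normSq (1 - conj a * z) - Complex.normSq (a - z)
      = (1 - Complex.normSq a) * (1 - Complex.normSq z) := by
    simp [Complex.normSq_apply, Complex.sub_re, Complex.sub_im, Complex.mul_re,
      Complex.mul_im, Complex.one_re, Complex.one_im]
    ring
  have ha' : Complex.normSq a < 1 := by rw [← Complex.sq_norm]; nlinarith [norm_nonneg a]
  have hz' : Complex.normSq z < 1 := by rw [← Complex.sq_norm]; nlinarith [norm_nonneg z]
  have ha0 : 0 ≤ Complex.normSq a := Complex.normSq_nonneg a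
  have hz0 : 0 ≤ Complex.normSq z := Complex.normSq_nonneg z
  rw [Complex.norm_def, Complex.norm_def]
  exact Real.sqrt_lt_sqrt (Complex.normSq_nonneg _) (by nlinarith)

lemma conj_exp_I (θ : ℝ) : conj (Complex.exp (θ*Complex.I)) = (Complex.exp (θ*Complex.I))⁻¹ := by
  rw [← Complex.exp_conj, ← Complex.exp_neg]
  congr 1
  simp

lemma exists_arg {ω : ℂ} (h : ‖ω‖ = 1) :
    ∃ θ : ℝ, 0 ≤ θ ∧ θ < 2*Real.pi ∧ Complex.exp (θ*Complex.I) = ω := by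
  have h0 : Complex.exp (ω.arg * Complex.I) = ω := by
    conv_rhs => rw [← Complex.norm_mul_exp_arg_mul_I ω]
    rw [h]; simp
  rcases le_or_gt 0 ω.arg with h1 | h1
  · exact ⟨ω.arg, h1, lt_of_le_of_lt (Complex.arg_le_pi ω) (by linarith [Real.pi_pos]), h0⟩
  · refine ⟨ω.arg + 2*Real.pi, by linarith [Complex.neg_pi_lt_arg ω], by linarith, ?_⟩
    have e : ((ω.arg + 2*Real.pi : ℝ) : ℂ) * Complex.I
        = ω.arg * Complex.I + 2*Real.pi*Complex.I := by push_cast; ring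
    rw [e, Complex.exp_add, Complex.exp_two_pi_mul_I, mul_one, h0]

lemma isOpen_unitDisc : IsOpen unitDisc :=
  isOpen_lt continuous_norm continuous_const

lemma bracket_step (a z w μ : ℂ) (hμ0 : μ ≠ 0) (hcμ : conj μ = μ⁻¹)
    (h1 : 1 - conj a * z ≠ 0) (h2 : 1 - conj a * w ≠ 0)
    (h3 : 1 - a * conj w ≠ 0)
    (h4 : 1 - conj w * z ≠ 0) (h5 : 1 - a * conj a ≠ 0) :
    hbr (μ * ((a - z)/(1 - conj a * z))) (μ * ((a - w)/(1 - conj a * w)))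
      = (-μ * conj (1 - conj a * w) / (1 - conj a * w)) * hbr z w := by
  have h1' : 1 - z * conj a ≠ 0 := by rwa [mul_comm]
  have h2' : 1 - w * conj a ≠ 0 := by rwa [mul_comm]
  have h3' : 1 - conj w * a ≠ 0 := by rwa [mul_comm]
  have h4' : 1 - z * conj w ≠ 0 := by rwa [mul_comm]
  have h5' : 1 - conj a * a ≠ 0 := by rwa [mul_comm]
  have e1 : μ * ((a - w)/(1 - conj a * w)) - μ * ((a - z)/(1 - conj a * z))
      = μ * (z - w) * (1 - a * conj a) / ((1 - conj a * w) * (1 - conj a * z)) := by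
    field_simp
    ring
  have e2 : 1 - conj (μ * ((a - w)/(1 - conj a * w))) * (μ * ((a - z)/(1 - conj a * z)))
      = (1 - a * conj a) * (1 - conj w * z) / ((1 - a * conj w) * (1 - conj a * z)) := by
    simp only [map_mul, map_div₀, map_sub, map_one, Complex.conj_conj, hcμ]
    field_simp
    ring
  have e3 : conj (1 - conj a * w) = 1 - a * conj w := by
    simp [map_sub, map_mul]
  rw [hbr, hbr, e1, e2, e3]
  field_simp
  ring

lemma T_inj (a z w μ : ℂ) (hμ0 : μ ≠ 0)
    (h1 : 1 - conj a * z ≠ 0) (h2 : 1 - conj a * w ≠ 0) (h5 : 1 - a * conj a ≠ 0)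
    (h : μ * ((a - z)/(1 - conj a * z)) = μ * ((a - w)/(1 - conj a * w))) : z = w := by
  have h' : μ * (a - z) * (1 - conj a * w) = μ * (a - w) * (1 - conj a * z) := by
    rw [mul_div_assoc', mul_div_assoc', div_eq_div_iff h1 h2] at h
    exact h
  have h'' : μ * ((z - w) * (a * conj a - 1)) = 0 := by linear_combination h'
  rcases mul_eq_zero.mp h'' with h3 | h3
  · exact absurd h3 hμ0
  · rcases mul_eq_zero.mp h3 with h4 | h4
    · exact sub_eq_zero.mp h4
    · exact absurd (by linear_combination -h4) h5

lemma hasDerivAt_T (a : ℂ) (θ : ℝ) (z : ℂ) (h : 1 - conj a * z ≠ 0) :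
    HasDerivAt (fun w => Complex.exp (θ*Complex.I) * ((a - w)/(1 - conj a * w)))
      (Complex.exp (θ*Complex.I) * (conj a * a - 1)/(1 - conj a * z)^2) z := by
  have h1 : HasDerivAt (fun w : ℂ => a - w) (-1) z := by
    simpa using (hasDerivAt_id z).const_sub a
  have h2 : HasDerivAt (fun w : ℂ => 1 - conj a * w) (-(conj a)) z := by
    simpa using ((hasDerivAt_id z).const_mul (conj a)).const_sub 1
  have h3 := (h1.div h2 h).const_mul (Complex.exp (θ*Complex.I))
  convert h3 using 1
  · rfl
  · rfl
  · rfl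
  ring

lemma hyp_step (a b z₁ w₀ u v df p r : ℂ)
    (hp : p ≠ 0) (hr : r ≠ 0)
    (hu : u = p * ((a - z₁)/(1 - conj a * z₁)))
    (hcu : conj u = p⁻¹ * ((conj a - conj z₁)/(1 - a * conj z₁)))
    (hv : v = r * ((b - w₀)/(1 - conj b * w₀)))
    (hcv : conj v = r⁻¹ * ((conj b - conj w₀)/(1 - b * conj w₀)))
    (h1 : 1 - conj a * z₁ ≠ 0) (h2 : 1 - a * conj z₁ ≠ 0)
    (h3 : 1 - conj b * w₀ ≠ 0) (h4 : 1 - b * conj w₀ ≠ 0)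
    (h5 : 1 - v * conj v ≠ 0) (h6 : 1 - w₀ * conj w₀ ≠ 0)
    (h7 : 1 - b * conj b ≠ 0) (h8 : 1 - a * conj a ≠ 0) :
    (1 - z₁ * conj z₁) * ((r * (conj b * b - 1)/(1 - conj b * w₀)^2)
        * (df * (p * (conj a * a - 1)/(1 - conj a * z₁)^2))) / (1 - v * conj v)
      = ((-r * conj (1 - conj b * w₀) / (1 - conj b * w₀))
          * (-p * conj (1 - conj a * z₁)/(1 - conj a * z₁)))
        * ((1 - u * conj u) * df / (1 - w₀ * conj w₀)) := by
  have h1' : 1 - z₁ * conj a ≠ 0 := by rwa [mul_comm]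
  have h2' : 1 - conj z₁ * a ≠ 0 := by rwa [mul_comm]
  have h3' : 1 - w₀ * conj b ≠ 0 := by rwa [mul_comm]
  have h4' : 1 - conj w₀ * b ≠ 0 := by rwa [mul_comm]
  have h5' : 1 - conj v * v ≠ 0 := by rwa [mul_comm]
  have h6' : 1 - conj w₀ * w₀ ≠ 0 := by rwa [mul_comm]
  have h7' : 1 - conj b * b ≠ 0 := by rwa [mul_comm]
  have h8' : 1 - conj a * a ≠ 0 := by rwa [mul_comm]
  have huu : 1 - u * conj u
      = (1 - a*conj a)*(1 - z₁*conj z₁)/((1 - conj a*z₁)*(1 - a*conj z₁)) := by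
    rw [hcu, hu]
    field_simp
    ring
  have hvv : 1 - v * conj v
      = (1 - b*conj b)*(1 - w₀*conj w₀)/((1 - conj b*w₀)*(1 - b*conj w₀)) := by
    rw [hcv, hv]
    field_simp
    ring
  have e3 : conj (1 - conj a * z₁) = 1 - a * conj z₁ := by simp [map_sub, map_mul]
  have e4 : conj (1 - conj b * w₀) = 1 - b * conj w₀ := by simp [map_sub, map_mul]
  rw [huu, hvv, e3, e4]
  field_simp
  ring

theorem conformal_invariance_of_difference_quotient
    (f : ℂ → ℂ) (hf : IsSelfMap f)
    (φ ψ : ℂ → ℂ) (hφ : IsDiscAutomorphism φ) (hψ : IsDiscAutomorphism ψ)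
    (z₁ : ℂ) (hz₁ : z₁ ∈ unitDisc) :
    ∃ θ : ℝ, 0 ≤ θ ∧ θ < 2 * Real.pi ∧
      ∀ z ∈ unitDisc,
        hdq1 (ψ ∘ f ∘ φ) z₁ z
          = Complex.exp (θ * Complex.I) * hdq1 f (φ z₁) (φ z) := by
  obtain ⟨θφ, a, ha, hφeq⟩ := hφ
  obtain ⟨θψ, b, hb, hψeq⟩ := hψ
  have ha' : ‖a‖ < 1 := ha
  have hb' : ‖b‖ < 1 := hb
  have hz₁' : ‖z₁‖ < 1 := hz₁
  have hp0 : Complex.exp ((θφ : ℂ)*Complex.I) ≠ 0 := Complex.exp_ne_zero _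
  have hr0 : Complex.exp ((θψ : ℂ)*Complex.I) ≠ 0 := Complex.exp_ne_zero _
  have hp1 : ‖Complex.exp ((θφ : ℂ)*Complex.I)‖ = 1 :=
    Complex.norm_exp_ofReal_mul_I θφ
  have hr1 : ‖Complex.exp ((θψ : ℂ)*Complex.I)‖ = 1 :=
    Complex.norm_exp_ofReal_mul_I θψ
  have d1 : 1 - conj a * z₁ ≠ 0 := one_sub_ne ha' hz₁'
  have hu : φ z₁ = Complex.exp ((θφ : ℂ)*Complex.I) * ((a - z₁)/(1 - conj a * z₁)) :=
    hφeq z₁ hz₁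
  have hφz₁' : ‖φ z₁‖ < 1 := by
    rw [hu, norm_mul, hp1, one_mul]; exact frac_mem ha' hz₁'
  have hφz₁ : φ z₁ ∈ unitDisc := hφz₁'
  have hw₀ : f (φ z₁) ∈ unitDisc := hf.2 hφz₁
  have hw₀' : ‖f (φ z₁)‖ < 1 := hw₀
  have d3 : 1 - conj b * f (φ z₁) ≠ 0 := one_sub_ne hb' hw₀'
  have hv : ψ (f (φ z₁))
      = Complex.exp ((θψ : ℂ)*Complex.I) * ((b - f (φ z₁))/(1 - conj b * f (φ z₁))) :=
    hψeq _ hw₀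
  have hv' : ‖ψ (f (φ z₁))‖ < 1 := by
    rw [hv, norm_mul, hr1, one_mul]; exact frac_mem hb' hw₀'
  -- the unimodular constant
  set Mψ : ℂ := -Complex.exp ((θψ : ℂ)*Complex.I) * conj (1 - conj b * f (φ z₁))
      / (1 - conj b * f (φ z₁)) with hMψ
  set Mφ : ℂ := -Complex.exp ((θφ : ℂ)*Complex.I) * conj (1 - conj a * z₁)
      / (1 - conj a * z₁) with hMφ
  have habsM : ∀ (μ d : ℂ), ‖μ‖ = 1 → d ≠ 0 →
      ‖-μ * conj d / d‖ = 1 := by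
    intro μ d hμ hd
    rw [norm_div, norm_mul]
    rw [show ‖-μ‖ = ‖μ‖ from by simp, hμ, one_mul,
      Complex.norm_conj, div_self (norm_ne_zero_iff.mpr hd)]
  have habs : ‖Mψ * Mφ‖ = 1 := by
    rw [norm_mul, habsM _ _ hr1 d3, habsM _ _ hp1 d1, one_mul]
  obtain ⟨θ, hθ0, hθ2, hθ⟩ := exists_arg habs
  refine ⟨θ, hθ0, hθ2, ?_⟩
  intro z hz
  have hz' : ‖z‖ < 1 := hz
  rw [hθ]
  by_cases hzz : z = z₁
  · subst hzz
    simp only [hdq1, if_pos rfl]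
    -- derivative computations
    have hevφ : φ =ᶠ[nhds z] fun w =>
        Complex.exp ((θφ : ℂ)*Complex.I) * ((a - w)/(1 - conj a * w)) :=
      Filter.eventuallyEq_of_mem (isOpen_unitDisc.mem_nhds hz) hφeq
    have hφ' : HasDerivAt φ
        (Complex.exp ((θφ : ℂ)*Complex.I) * (conj a * a - 1)/(1 - conj a * z)^2) z :=
      (hasDerivAt_T a θφ z d1).congr_of_eventuallyEq hevφ
    have hf' : HasDerivAt f (deriv f (φ z)) (φ z) :=
      (hf.1.differentiableAt (isOpen_unitDisc.mem_nhds hφz₁)).hasDerivAt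
    have hevψ : ψ =ᶠ[nhds (f (φ z))] fun w =>
        Complex.exp ((θψ : ℂ)*Complex.I) * ((b - w)/(1 - conj b * w)) :=
      Filter.eventuallyEq_of_mem (isOpen_unitDisc.mem_nhds hw₀) hψeq
    have hψ' : HasDerivAt ψ
        (Complex.exp ((θψ : ℂ)*Complex.I) * (conj b * b - 1)/(1 - conj b * f (φ z))^2)
        (f (φ z)) :=
      (hasDerivAt_T b θψ (f (φ z)) d3).congr_of_eventuallyEq hevψ
    have hcomp : HasDerivAt (ψ ∘ f ∘ φ)
        ((Complex.exp ((θψ : ℂ)*Complex.I) * (conj b * b - 1)/(1 - conj b * f (φ z))^2)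
          * (deriv f (φ z)
            * (Complex.exp ((θφ : ℂ)*Complex.I) * (conj a * a - 1)/(1 - conj a * z)^2))) z :=
      hψ'.comp z (hf'.comp z hφ')
    have hcu : conj (φ z) = (Complex.exp ((θφ : ℂ)*Complex.I))⁻¹
        * ((conj a - conj z)/(1 - a * conj z)) := by
      rw [hu]
      simp only [map_mul, map_div₀, map_sub, Complex.conj_conj, map_one, conj_exp_I]
    have hcv : conj (ψ (f (φ z))) = (Complex.exp ((θψ : ℂ)*Complex.I))⁻¹
        * ((conj b - conj (f (φ z)))/(1 - b * conj (f (φ z)))) := by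
      rw [hv]
      simp only [map_mul, map_div₀, map_sub, Complex.conj_conj, map_one, conj_exp_I]
    simp only [hypDeriv, Function.comp_apply, absq]
    rw [hcomp.deriv]
    exact hyp_step a b z (f (φ z)) (φ z) (ψ (f (φ z))) (deriv f (φ z)) _ _
      hp0 hr0 hu hcu hv hcv d1 (one_sub_ne' ha' hz') d3 (one_sub_ne' hb' hw₀')
      (one_sub_self_conj_ne hv') (one_sub_self_conj_ne hw₀')
      (one_sub_ne' hb' hb') (one_sub_ne' ha' ha')
  · have d1z : 1 - conj a * z ≠ 0 := one_sub_ne ha' hz'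
    have hφz' : ‖φ z‖ < 1 := by
      rw [hφeq z hz, norm_mul, hp1, one_mul]; exact frac_mem ha' hz'
    have hφz : φ z ∈ unitDisc := hφz'
    have hX : f (φ z) ∈ unitDisc := hf.2 hφz
    have hX' : ‖f (φ z)‖ < 1 := hX
    have hφne : φ z ≠ φ z₁ := by
      intro h
      apply hzz
      rw [hφeq z hz, hu] at h
      exact T_inj a z z₁ _ hp0 d1z d1 (one_sub_ne' ha' ha') h
    simp only [hdq1, if_neg hzz, if_neg hφne, Function.comp_apply]
    have hbψ := bracket_step b (f (φ z)) (f (φ z₁)) (Complex.exp ((θψ : ℂ)*Complex.I))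
      hr0 (conj_exp_I θψ) (one_sub_ne hb' hX') d3 (one_sub_ne' hb' hw₀')
      (one_sub_ne hw₀' hX') (one_sub_ne' hb' hb')
    have hbφ := bracket_step a z z₁ (Complex.exp ((θφ : ℂ)*Complex.I))
      hp0 (conj_exp_I θφ) d1z d1 (one_sub_ne' ha' hz₁')
      (one_sub_ne hz₁' hz') (one_sub_ne' ha' ha')
    have hbψ' : hbr (ψ (f (φ z))) (ψ (f (φ z₁)))
        = -Complex.exp ((θψ : ℂ)*Complex.I) * conj (1 - conj b * f (φ z₁))
          / (1 - conj b * f (φ z₁)) * hbr (f (φ z)) (f (φ z₁)) := by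
      rw [hψeq _ hX, hψeq _ hw₀]; exact hbψ
    have hbφ' : hbr (φ z) (φ z₁)
        = -Complex.exp ((θφ : ℂ)*Complex.I) * conj (1 - conj a * z₁)
          / (1 - conj a * z₁) * hbr z z₁ := by
      rw [hφeq z hz, hu]; exact hbφ
    rw [hbψ', hbφ']
    have hbrne : hbr z z₁ ≠ 0 := by
      rw [hbr]
      exact div_ne_zero (sub_ne_zero.mpr (Ne.symm hzz)) (one_sub_ne hz₁' hz')
    have hMφ0 : -Complex.exp ((θφ : ℂ)*Complex.I) * conj (1 - conj a * z₁)
        / (1 - conj a * z₁) ≠ 0 :=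
      div_ne_zero (mul_ne_zero (neg_ne_zero.mpr hp0) (conj_ne_zero_of_ne d1)) d1
    have key : ∀ M N X Y : ℂ, N ≠ 0 → Y ≠ 0 → M * X / Y = M * N * (X / (N * Y)) := by
      intro M N X Y hN hY
      field_simp
    exact key _ _ _ _ hMφ0 hbrne
end
end
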